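/- arXiv:2011.05899 — 2 statements merged into one kernel-verified Lean document; each statement's English description precedes it below -/
import Mathlib

section
/- Let (x_n)_{n∈ℕ} be a bounded sequence of real numbers such that the average av((x_n)) exists and equals 0, and such that the average av((x_n²)) exists. Then limsup_{n→∞} x_n · limsup_{n→∞} |x_n| ≥ av((x_n²)). -/
open Filter

private lemma aux_avg_le (x : ℕ → ℝ) (S a b : ℝ)
    (h0 : Tendsto (fun n : ℕ => (∑ k ∈ Finset.range n, x k) / (n : ℝ)) atTop (nhds 0))
    (hS : Tendsto (fun n : ℕ => (∑ k ∈ Finset.range n, (x k) ^ 2) / (n : ℝ)) atTop (nhds S))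
    (ha : ∀ᶠ n in atTop, x n ≤ a) (hb : ∀ᶠ n in atTop, -b ≤ x n) :
    S ≤ a * b := by
  set y : ℕ → ℝ := fun n => (x n - a) * (x n + b) with hy
  -- average of y tends to S - a*b
  have hyavg : Tendsto (fun n : ℕ => (∑ k ∈ Finset.range n, y k) / (n : ℝ)) atTop
      (nhds (S - a * b)) := by
    have heq : ∀ᶠ n : ℕ in atTop,
        (∑ k ∈ Finset.range n, (x k) ^ 2) / (n : ℝ)
          + (b - a) * ((∑ k ∈ Finset.range n, x k) / (n : ℝ)) - a * b
        = (∑ k ∈ Finset.range n, y k) / (n : ℝ) := by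
      filter_upwards [eventually_ge_atTop 1] with n hn
      have hn0 : (n : ℝ) ≠ 0 := by positivity
      have : (∑ k ∈ Finset.range n, y k)
          = (∑ k ∈ Finset.range n, (x k) ^ 2) + (b - a) * (∑ k ∈ Finset.range n, x k)
            - (n : ℝ) * (a * b) := by
        rw [Finset.sum_congr rfl (fun k _ => show y k = (x k) ^ 2 + (b - a) * x k - a * b by
          simp only [hy]; ring)]
        rw [Finset.sum_sub_distrib, Finset.sum_add_distrib, ← Finset.mul_sum,
          Finset.sum_const, Finset.card_range, nsmul_eq_mul]
      rw [this]
      field_simp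
    apply Tendsto.congr' heq
    have h2 : Tendsto (fun n : ℕ => (∑ k ∈ Finset.range n, (x k) ^ 2) / (n : ℝ)
        + (b - a) * ((∑ k ∈ Finset.range n, x k) / (n : ℝ)) - a * b) atTop
        (nhds (S + (b - a) * 0 - a * b)) :=
      (hS.add (h0.const_mul (b - a))).sub tendsto_const_nhds
    simpa using h2
  -- eventually y n ≤ 0
  have hyneg : ∀ᶠ n in atTop, y n ≤ 0 := by
    filter_upwards [ha, hb] with n h1 h2
    exact mul_nonpos_of_nonpos_of_nonneg (by linarith) (by linarith)
  obtain ⟨N, hN⟩ := eventually_atTop.1 hyneg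
  set C : ℝ := ∑ k ∈ Finset.range N, y k with hC
  have key : ∀ᶠ n : ℕ in atTop, (∑ k ∈ Finset.range n, y k) / (n : ℝ) ≤ C / (n : ℝ) := by
    filter_upwards [eventually_ge_atTop (max N 1)] with n hn
    have hn1 : 1 ≤ n := le_trans (le_max_right _ _) hn
    have hNn : N ≤ n := le_trans (le_max_left _ _) hn
    have hn0 : (0 : ℝ) < n := by exact_mod_cast hn1
    have hsum : (∑ k ∈ Finset.range n, y k) ≤ C := by
      have h1 : (∑ k ∈ Finset.range n, y k)
          = C + ∑ k ∈ Finset.Ico N n, y k := by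
        rw [hC, ← Finset.sum_range_add_sum_Ico _ hNn]
      have h2 : ∑ k ∈ Finset.Ico N n, y k ≤ 0 :=
        Finset.sum_nonpos fun k hk => hN k (Finset.mem_Ico.1 hk).1
      linarith
    exact (div_le_div_iff_of_pos_right hn0).2 hsum
  have hCzero : Tendsto (fun n : ℕ => C / (n : ℝ)) atTop (nhds 0) :=
    tendsto_const_nhds.div_atTop tendsto_natCast_atTop_atTop
  have := le_of_tendsto_of_tendsto hyavg hCzero key
  linarith

/-- **Lemma 5.** If `(xₙ)` is a bounded real sequence with average `0` whose squares have an
average, then `limsup xₙ · limsup |xₙ| ≥ av((xₙ²))`. -/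
theorem limsup_mul_limsup_abs_ge_average_of_squares
    (x : ℕ → ℝ) (M : ℝ) (hM : ∀ n, |x n| ≤ M)
    (h0 : Tendsto (fun n : ℕ => (∑ k ∈ Finset.range n, x k) / (n : ℝ)) atTop (nhds 0))
    (S : ℝ)
    (hS : Tendsto (fun n : ℕ => (∑ k ∈ Finset.range n, (x k) ^ 2) / (n : ℝ)) atTop (nhds S)) :
    S ≤ Filter.limsup x Filter.atTop * Filter.limsup (fun n => |x n|) Filter.atTop := by
  set A := Filter.limsup x Filter.atTop with hA
  set B := Filter.limsup (fun n => |x n|) Filter.atTop with hB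
  have hbx : IsBoundedUnder (· ≤ ·) atTop x :=
    ⟨M, Filter.eventually_map.2 (Eventually.of_forall fun n => (le_abs_self _).trans (hM n))⟩
  have hbax : IsBoundedUnder (· ≤ ·) atTop (fun n => |x n|) :=
    ⟨M, Filter.eventually_map.2 (Eventually.of_forall fun n => hM n)⟩
  have hstep : ∀ ε > (0:ℝ), S ≤ (A + ε) * (B + ε) := by
    intro ε hε
    have ha : ∀ᶠ n in atTop, x n ≤ A + ε := by
      filter_upwards [eventually_lt_of_limsup_lt (lt_add_of_pos_right A hε) hbx] with n hn
      exact hn.le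
    have hb : ∀ᶠ n in atTop, -(B + ε) ≤ x n := by
      filter_upwards [eventually_lt_of_limsup_lt (lt_add_of_pos_right B hε) hbax] with n hn
      have := abs_lt.1 hn
      linarith [this.1]
    exact aux_avg_le x S (A + ε) (B + ε) h0 hS ha hb
  have hcont : Tendsto (fun ε : ℝ => (A + ε) * (B + ε)) (nhdsWithin 0 (Set.Ioi 0))
      (nhds (A * B)) := by
    have h1 : Continuous fun ε : ℝ => (A + ε) * (B + ε) := by continuity
    have := h1.tendsto 0
    simpa using this.mono_left nhdsWithin_le_nhds
  exact ge_of_tendsto hcont (eventually_nhdsWithin_of_forall fun ε hε => hstep ε hε)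
end

section
/- Let (x_k)_{k∈ℕ} be a sequence of positive real numbers tending to ∞ with Σ_k 1/x_k < ∞, so that the product Π_{k=1}^{∞} (1 + z/x_k) defines an entire function, and let P be a polynomial with positive leading coefficient. Let F(z) = P(z) · Π_{k=1}^{∞} (1 + z/x_k), and write F(z) = Σ_{n=0}^{∞} c_n z^n. Then c_n ≠ 0 for all sufficiently large n and arg c_n → 0 as n → ∞. -/
open Complex Filter

namespace TaylorArgAux

lemma summable_prod_finset {b : ℕ → ℝ} (hb0 : ∀ k, 0 ≤ b k) (hb : Summable b) :
    Summable (fun s : Finset ℕ => ∏ k ∈ s, b k) := by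
  apply summable_of_sum_le (c := Real.exp (∑' k, b k))
  · intro s
    exact Finset.prod_nonneg fun k _ => hb0 k
  · intro u
    set K : ℕ := (u.sup fun s => s.sup id) + 1 with hK
    have hsub : ∀ s ∈ u, s ⊆ Finset.range K := by
      intro s hs k hk
      simp only [Finset.mem_range, hK]
      have : k ≤ u.sup (fun s => s.sup id) :=
        le_trans (Finset.le_sup (f := id) hk) (Finset.le_sup hs)
      omega
    calc ∑ s ∈ u, ∏ k ∈ s, b k
        ≤ ∑ s ∈ (Finset.range K).powerset, ∏ k ∈ s, b k := by
          apply Finset.sum_le_sum_of_subset_of_nonneg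
          · intro s hs; exact Finset.mem_powerset.2 (hsub s hs)
          · intros s _ _; exact Finset.prod_nonneg fun k _ => hb0 k
      _ = ∏ k ∈ Finset.range K, (b k + 1) := by
          rw [Finset.prod_add]; simp
      _ ≤ ∏ k ∈ Finset.range K, Real.exp (b k) := by
          apply Finset.prod_le_prod
          · intro k _; have := hb0 k; linarith
          · intro k _; have := Real.add_one_le_exp (b k); linarith
      _ = Real.exp (∑ k ∈ Finset.range K, b k) := by rw [← Real.exp_sum]
      _ ≤ Real.exp (∑' k, b k) := by
          apply Real.exp_le_exp.2
          exact Summable.sum_le_tsum _ (fun k _ => hb0 k) hb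

lemma summable_zprod_finset {b : ℕ → ℝ} (hb0 : ∀ k, 0 ≤ b k) (hb : Summable b) (z : ℂ) :
    Summable (fun s : Finset ℕ => ∏ k ∈ s, (z * (b k : ℂ))) := by
  apply Summable.of_norm
  have : Summable (fun s : Finset ℕ => ∏ k ∈ s, (‖z‖ * b k)) :=
    summable_prod_finset (fun k => mul_nonneg (norm_nonneg z) (hb0 k)) (hb.mul_left ‖z‖)
  apply this.congr
  intro s
  rw [norm_prod]
  exact Finset.prod_congr rfl fun k _ => by
    rw [norm_mul, Complex.norm_real, Real.norm_of_nonneg (hb0 k)]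

lemma hasProd_one_add {b : ℕ → ℝ} (hb0 : ∀ k, 0 ≤ b k) (hb : Summable b) (z : ℂ) :
    HasProd (fun k => 1 + z * (b k : ℂ))
      (∑' s : Finset ℕ, ∏ k ∈ s, (z * (b k : ℂ))) := by
  have hsum := summable_zprod_finset hb0 hb z
  have hT : HasSum (fun s : Finset ℕ => ∏ k ∈ s, (z * (b k : ℂ)))
      (∑' s : Finset ℕ, ∏ k ∈ s, (z * (b k : ℂ))) := hsum.hasSum
  have htend : Tendsto (fun S : Finset ℕ => S.powerset) atTop atTop :=
    tendsto_atTop_finset_of_monotone (fun _ _ h => Finset.powerset_mono.2 h)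
      (fun s => ⟨s, Finset.mem_powerset_self s⟩)
  have h2 := hT.comp htend
  apply h2.congr
  intro S
  simp only [Function.comp]
  rw [eq_comm]
  calc ∏ k ∈ S, (1 + z * (b k : ℂ)) = ∏ k ∈ S, (z * (b k : ℂ) + 1) := by
        exact Finset.prod_congr rfl fun k _ => add_comm _ _
    _ = ∑ s ∈ S.powerset, ∏ k ∈ s, (z * (b k : ℂ)) := by
        rw [Finset.prod_add]; simp



noncomputable def esum (b : ℕ → ℝ) (n : ℕ) : ℝ :=
  ∑' s : {s : Finset ℕ // s.card = n}, ∏ k ∈ (s : Finset ℕ), b k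

lemma summable_esum_fiber {b : ℕ → ℝ} (hb0 : ∀ k, 0 ≤ b k) (hb : Summable b) (n : ℕ) :
    Summable (fun s : {s : Finset ℕ // s.card = n} => ∏ k ∈ (s : Finset ℕ), b k) := by
  exact (summable_prod_finset hb0 hb).subtype {s : Finset ℕ | s.card = n}

lemma esum_nonneg {b : ℕ → ℝ} (hb0 : ∀ k, 0 ≤ b k) (n : ℕ) : 0 ≤ esum b n :=
  tsum_nonneg fun s => Finset.prod_nonneg fun k _ => hb0 k

lemma esum_pos {b : ℕ → ℝ} (hb0 : ∀ k, 0 < b k) (hb : Summable b) (n : ℕ) :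
    0 < esum b n := by
  have h1 : (0:ℝ) < ∏ k ∈ Finset.range n, b k :=
    Finset.prod_pos fun k _ => hb0 k
  refine lt_of_lt_of_le h1 ?_
  exact Summable.le_tsum (summable_esum_fiber (fun k => (hb0 k).le) hb n)
    ⟨Finset.range n, Finset.card_range n⟩
    (fun j _ => Finset.prod_nonneg fun k _ => (hb0 k).le)

/-- The sigma equiv. -/
def finsetEquiv : (Σ n : ℕ, {s : Finset ℕ // s.card = n}) ≃ Finset ℕ where
  toFun p := p.2.1
  invFun s := ⟨s.card, s, rfl⟩
  left_inv p := by
    obtain ⟨n, s, hs⟩ := p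
    subst hs; rfl
  right_inv s := rfl

lemma hasSum_esum {b : ℕ → ℝ} (hb0 : ∀ k, 0 ≤ b k) (hb : Summable b) (z : ℂ) :
    HasSum (fun n => ((esum b n : ℝ) : ℂ) * z ^ n)
      (∏' k : ℕ, (1 + z * (b k : ℂ))) := by
  have hprod := hasProd_one_add hb0 hb z
  rw [hprod.tprod_eq]
  have hsum := summable_zprod_finset hb0 hb z
  have hT := hsum.hasSum
  -- transport along the equiv
  have hT' : HasSum (fun p : Σ n : ℕ, {s : Finset ℕ // s.card = n} =>
      ∏ k ∈ (p.2 : Finset ℕ), (z * (b k : ℂ)))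
      (∑' s : Finset ℕ, ∏ k ∈ s, (z * (b k : ℂ))) :=
    (Equiv.hasSum_iff finsetEquiv).2 hT
  refine hT'.sigma ?_
  intro n
  have hfib : ∀ s : {s : Finset ℕ // s.card = n},
      ∏ k ∈ (s : Finset ℕ), (z * (b k : ℂ)) = z ^ n * ((∏ k ∈ (s : Finset ℕ), b k : ℝ) : ℂ) := by
    intro s
    rw [Finset.prod_mul_distrib, Finset.prod_const, s.2]
    push_cast
    ring
  have hfs : Summable (fun s : {s : Finset ℕ // s.card = n} =>
      ((∏ k ∈ (s : Finset ℕ), b k : ℝ) : ℂ)) := by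
    rw [Complex.summable_ofReal]
    exact summable_esum_fiber hb0 hb n
  convert hfs.hasSum.mul_left (z ^ n) using 1
  · rfl
  · funext c
    exact hfib c
  · rw [esum, mul_comm, Complex.ofReal_tsum]

lemma summable_esum_mul_pow {b : ℕ → ℝ} (hb0 : ∀ k, 0 ≤ b k) (hb : Summable b)
    {r : ℝ} (hr : 0 ≤ r) : Summable (fun n => esum b n * r ^ n) := by
  have h := (hasSum_esum hb0 hb (r : ℂ)).summable
  have h2 : Summable (fun n => ((esum b n * r ^ n : ℝ) : ℂ)) := by
    apply h.congr
    intro n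
    push_cast
    ring
  rwa [Complex.summable_ofReal] at h2

lemma nonempty_of_card_succ {n : ℕ} (s : {s : Finset ℕ // s.card = n + 1}) :
    (s : Finset ℕ).Nonempty := by
  rw [← Finset.card_pos, s.2]; omega

lemma le_max'_of_card_succ {n : ℕ} (s : {s : Finset ℕ // s.card = n + 1}) :
    n ≤ (s : Finset ℕ).max' (nonempty_of_card_succ s) := by
  have hsub : (s : Finset ℕ) ⊆ Finset.range ((s : Finset ℕ).max' (nonempty_of_card_succ s) + 1) := by
    intro k hk
    rw [Finset.mem_range]
    exact Nat.lt_succ_of_le (Finset.le_max' _ k hk)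
  have := Finset.card_le_card hsub
  rw [s.2, Finset.card_range] at this
  omega

/-- Injection from `(n+1)`-subsets to `ℕ × (n-subsets)`. -/
noncomputable def shrink (n : ℕ) (s : {s : Finset ℕ // s.card = n + 1}) :
    ℕ × {t : Finset ℕ // t.card = n} :=
  ⟨(s : Finset ℕ).max' (nonempty_of_card_succ s) - n,
    ⟨(s : Finset ℕ).erase ((s : Finset ℕ).max' (nonempty_of_card_succ s)), by
      rw [Finset.card_erase_of_mem (Finset.max'_mem _ _), s.2]; omega⟩⟩

lemma shrink_fst {n : ℕ} (s : {s : Finset ℕ // s.card = n + 1}) :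
    (shrink n s).1 + n = (s : Finset ℕ).max' (nonempty_of_card_succ s) := by
  have := le_max'_of_card_succ s
  simp only [shrink]
  omega

lemma shrink_recover {n : ℕ} (s : {s : Finset ℕ // s.card = n + 1}) :
    (s : Finset ℕ) = insert ((shrink n s).1 + n) ((shrink n s).2 : Finset ℕ) := by
  rw [shrink_fst]
  exact (Finset.insert_erase (Finset.max'_mem _ _)).symm

lemma shrink_injective (n : ℕ) : Function.Injective (shrink n) := by
  intro s s' h
  apply Subtype.ext
  rw [shrink_recover s, shrink_recover s', h]

set_option maxHeartbeats 1000000 in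
lemma esum_succ_le {b : ℕ → ℝ} (hb0 : ∀ k, 0 ≤ b k) (hb : Summable b) (n : ℕ) :
    esum b (n + 1) ≤ (∑' m, b (m + n)) * esum b n := by
  classical
  have hg : Summable (fun p : ℕ × {t : Finset ℕ // t.card = n} =>
      b (p.1 + n) * ∏ k ∈ (p.2 : Finset ℕ), b k) := by
    exact Summable.mul_of_nonneg ((summable_nat_add_iff n).2 hb)
      (summable_esum_fiber hb0 hb n)
      (fun m => hb0 (m + n)) (fun t => Finset.prod_nonneg fun k _ => hb0 k)
  have hle : esum b (n + 1) ≤ ∑' p : ℕ × {t : Finset ℕ // t.card = n},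
      b (p.1 + n) * ∏ k ∈ (p.2 : Finset ℕ), b k := by
    apply Summable.tsum_le_tsum_of_inj (shrink n) (shrink_injective n)
    · intro p _
      exact mul_nonneg (hb0 _) (Finset.prod_nonneg fun k _ => hb0 k)
    · intro s
      show ∏ k ∈ (s : Finset ℕ), b k ≤ b ((shrink n s).1 + n) * ∏ k ∈ ((shrink n s).2 : Finset ℕ), b k
      rw [shrink_fst]
      have : ∏ k ∈ (s : Finset ℕ), b k
          = b ((s : Finset ℕ).max' (nonempty_of_card_succ s)) *
            ∏ k ∈ (s : Finset ℕ).erase ((s : Finset ℕ).max' (nonempty_of_card_succ s)), b k :=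
        (Finset.mul_prod_erase _ _ (Finset.max'_mem _ _)).symm
      rw [this]
      rfl
    · exact summable_esum_fiber hb0 hb (n + 1)
    · exact hg
  refine hle.trans (le_of_eq ?_)
  rw [Summable.tsum_prod' hg (fun m => (summable_esum_fiber hb0 hb n).mul_left (b (m + n)))]
  calc ∑' (m : ℕ) (t : {t : Finset ℕ // t.card = n}), b (m + n) * ∏ k ∈ (t : Finset ℕ), b k
      = ∑' (m : ℕ), b (m + n) * esum b n := by
        apply tsum_congr; intro m; rw [tsum_mul_left]; rfl
    _ = (∑' m, b (m + n)) * esum b n := by rw [tsum_mul_right]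

lemma antidiag_sum_eq {A : Type*} [CommRing A] (f g : ℕ → A) (z : A) (n : ℕ) :
    ∑ kl ∈ Finset.HasAntidiagonal.antidiagonal n, (f kl.1 * z ^ kl.1) * (g kl.2 * z ^ kl.2)
      = (∑ j ∈ Finset.range (n + 1), f j * g (n - j)) * z ^ n := by
  rw [Finset.Nat.sum_antidiagonal_eq_sum_range_succ_mk, Finset.sum_mul]
  apply Finset.sum_congr rfl
  intro k hk
  rw [Finset.mem_range] at hk
  have hz : z ^ k * z ^ (n - k) = z ^ n := by rw [← pow_add]; congr 1; omega
  calc f k * z ^ k * (g (n - k) * z ^ (n - k))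
      = f k * g (n - k) * (z ^ k * z ^ (n - k)) := by ring
    _ = f k * g (n - k) * z ^ n := by rw [hz]

end TaylorArgAux

open TaylorArgAux in
set_option maxHeartbeats 2000000 in
/-- **Lemma 15.** Let `F(z) = P(z) ∏ₖ (1 + z/xₖ)` where `(xₖ)` is a sequence of positive reals
tending to `∞` with `∑ 1/xₖ < ∞`, and `P` is a real polynomial with positive leading
coefficient. Then the Taylor coefficients of `F` are eventually nonzero and their arguments
tend to `0`. -/
theorem taylor_coefficients_argument_tendsto_zero
    (x : ℕ → ℝ) (hx : ∀ k, 0 < x k) (hxt : Tendsto x atTop atTop)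
    (hxs : Summable (fun k => 1 / x k))
    (P : Polynomial ℝ) (hP : 0 < P.leadingCoeff)
    (F : ℂ → ℂ)
    (hF : ∀ z : ℂ, F z = (Polynomial.aeval z P) * ∏' k : ℕ, (1 + z / (x k : ℂ))) :
    (∀ᶠ n in atTop, iteratedDeriv n F 0 ≠ 0) ∧
      Tendsto (fun n : ℕ => (iteratedDeriv n F 0 / (n.factorial : ℂ)).arg) atTop (nhds 0) := by
  classical
  set b : ℕ → ℝ := fun k => 1 / x k with hbdef
  have hb0 : ∀ k, 0 < b k := fun k => by
    simp only [hbdef]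
    exact one_div_pos.2 (hx k)
  have hb0' : ∀ k, 0 ≤ b k := fun k => (hb0 k).le
  have hb : Summable b := hxs
  set d : ℕ := P.natDegree with hddef
  set c : ℕ → ℝ := fun n => ∑ j ∈ Finset.range (n + 1), P.coeff j * esum b (n - j) with hcdef
  set Cn : ℕ → ℝ := fun n => ∑ j ∈ Finset.range (n + 1), |P.coeff j| * esum b (n - j) with hCdef
  have hprodeq : ∀ z : ℂ, (∏' k : ℕ, (1 + z / (x k : ℂ))) = ∏' k : ℕ, (1 + z * (b k : ℂ)) := by
    intro z
    apply tprod_congr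
    intro k
    simp only [hbdef]
    push_cast
    rw [mul_one_div]
  -- Taylor expansion of F
  have hFsum : ∀ z : ℂ, HasSum (fun n => ((c n : ℝ) : ℂ) * z ^ n) (F z) := by
    intro z
    have hg := hasSum_esum hb0' hb z
    have hgs : Summable (fun n => ‖((esum b n : ℝ) : ℂ) * z ^ n‖) := by
      apply (summable_esum_mul_pow hb0' hb (norm_nonneg z)).congr
      intro n
      rw [norm_mul, Complex.norm_real, norm_pow, Real.norm_of_nonneg (esum_nonneg hb0' n)]
    have hfs : Summable (fun j => ‖((P.coeff j : ℝ) : ℂ) * z ^ j‖) := by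
      apply summable_of_ne_finset_zero (s := Finset.range (d + 1))
      intro j hj
      rw [Finset.mem_range, not_lt] at hj
      rw [Polynomial.coeff_eq_zero_of_natDegree_lt (by omega)]
      simp
    have hterm : ∀ n, ∑ kl ∈ Finset.HasAntidiagonal.antidiagonal n,
        (((P.coeff kl.1 : ℝ) : ℂ) * z ^ kl.1) * (((esum b kl.2 : ℝ) : ℂ) * z ^ kl.2)
          = ((c n : ℝ) : ℂ) * z ^ n := by
      intro n
      rw [antidiag_sum_eq (fun j => ((P.coeff j : ℝ) : ℂ)) (fun j => ((esum b j : ℝ) : ℂ)) z n]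
      congr 1
      simp only [hcdef]
      push_cast
      rfl
    have htsumf : (∑' j : ℕ, ((P.coeff j : ℝ) : ℂ) * z ^ j) = Polynomial.aeval z P := by
      rw [tsum_eq_sum (s := Finset.range (d + 1)) ?_]
      · rw [Polynomial.aeval_eq_sum_range]
        apply Finset.sum_congr rfl
        intro j _
        rw [Algebra.smul_def]
        rfl
      · intro j hj
        rw [Finset.mem_range, not_lt] at hj
        rw [Polynomial.coeff_eq_zero_of_natDegree_lt (by omega)]
        simp
    have hsum3 : Summable (fun n => ((c n : ℝ) : ℂ) * z ^ n) := by
      apply Summable.congr (Summable.of_norm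
        (summable_norm_sum_mul_antidiagonal_of_summable_norm hfs hgs)) hterm
    rw [Summable.hasSum_iff hsum3]
    calc (∑' n : ℕ, ((c n : ℝ) : ℂ) * z ^ n)
        = ∑' n : ℕ, ∑ kl ∈ Finset.HasAntidiagonal.antidiagonal n,
            (((P.coeff kl.1 : ℝ) : ℂ) * z ^ kl.1) * (((esum b kl.2 : ℝ) : ℂ) * z ^ kl.2) :=
          tsum_congr fun n => (hterm n).symm
      _ = (∑' j : ℕ, ((P.coeff j : ℝ) : ℂ) * z ^ j) * (∑' n : ℕ, ((esum b n : ℝ) : ℂ) * z ^ n) :=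
          (tsum_mul_tsum_eq_tsum_sum_antidiagonal_of_summable_norm hfs hgs).symm
      _ = F z := by
          rw [htsumf, hg.tsum_eq, ← hprodeq, ← hF]
  -- the power series
  set p : FormalMultilinearSeries ℂ ℂ ℂ :=
    FormalMultilinearSeries.ofScalars ℂ (fun n => ((c n : ℝ) : ℂ)) with hpdef
  have hCnonneg : ∀ n, 0 ≤ Cn n := by
    intro n
    apply Finset.sum_nonneg
    intro j _
    exact mul_nonneg (abs_nonneg _) (esum_nonneg hb0' _)
  have hpnorm : ∀ n, ‖p n‖ ≤ Cn n := by
    intro n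
    have h1 : ‖p n‖ ≤ |c n| := by
      simp only [hpdef, FormalMultilinearSeries.ofScalars]
      refine (norm_smul_le ((c n : ℝ) : ℂ) (ContinuousMultilinearMap.mkPiAlgebraFin ℂ n ℂ)).trans (le_of_eq ?_)
      rw [ContinuousMultilinearMap.norm_mkPiAlgebraFin, mul_one, Complex.norm_real,
        Real.norm_eq_abs]
    refine h1.trans ?_
    simp only [hcdef, hCdef]
    refine (Finset.abs_sum_le_sum_abs _ _).trans (le_of_eq ?_)
    apply Finset.sum_congr rfl
    intro j _
    rw [abs_mul, _root_.abs_of_nonneg (esum_nonneg hb0' _)]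
  have hCs : ∀ r : ℝ, 0 ≤ r → Summable (fun n => Cn n * r ^ n) := by
    intro r hr
    have hf' : Summable (fun j => ‖|P.coeff j| * r ^ j‖) := by
      apply summable_of_ne_finset_zero (s := Finset.range (d + 1))
      intro j hj
      rw [Finset.mem_range, not_lt] at hj
      rw [Polynomial.coeff_eq_zero_of_natDegree_lt (by omega)]
      simp
    have hg' : Summable (fun n => ‖esum b n * r ^ n‖) := by
      apply (summable_esum_mul_pow hb0' hb hr).congr
      intro n
      rw [Real.norm_of_nonneg (mul_nonneg (esum_nonneg hb0' n) (pow_nonneg hr n))]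
    apply Summable.congr (Summable.of_norm
      (summable_norm_sum_mul_antidiagonal_of_summable_norm hf' hg'))
    intro n
    rw [antidiag_sum_eq (fun j => |P.coeff j|) (fun j => esum b j) r n]
  have hps : HasFPowerSeriesOnBall F p 0 ⊤ := by
    refine ⟨?_, ?_, ?_⟩
    · rw [p.radius_eq_top_of_summable_norm ?_]
      intro r
      apply Summable.of_nonneg_of_le (fun n => by positivity)
        (fun n => mul_le_mul_of_nonneg_right (hpnorm n) (pow_nonneg r.coe_nonneg n))
      exact hCs r r.coe_nonneg
    · exact ENNReal.zero_lt_top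
    · intro y _
      rw [zero_add]
      simp only [hpdef, FormalMultilinearSeries.ofScalars_apply_eq, smul_eq_mul]
      exact hFsum y
  have hiter : ∀ n : ℕ, iteratedDeriv n F 0 = (n.factorial : ℂ) * ((c n : ℝ) : ℂ) := by
    intro n
    have h1 := hps.factorial_smul (1 : ℂ) n
    rw [iteratedDeriv_eq_iteratedFDeriv, ← h1]
    simp only [hpdef, FormalMultilinearSeries.ofScalars_apply_eq, one_pow, smul_eq_mul, mul_one,
      nsmul_eq_mul]
  -- eventual positivity of the coefficients
  have htail : Tendsto (fun m => ∑' k, b (k + m)) atTop (nhds 0) := tendsto_sum_nat_add b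
  set A : ℝ := P.leadingCoeff with hAdef
  set B : ℝ := ∑ j ∈ Finset.range d, |P.coeff j| with hBdef
  have hB0 : 0 ≤ B := Finset.sum_nonneg fun j _ => abs_nonneg _
  set ε : ℝ := min 1 (A / (2 * (B + 1))) with hεdef
  have hε0 : 0 < ε := lt_min one_pos (by positivity)
  have hε1 : ε ≤ 1 := min_le_left _ _
  have hεB : B * ε < A := by
    have hεle : ε ≤ A / (2 * (B + 1)) := min_le_right _ _
    have h2 : B * ε ≤ B * (A / (2 * (B + 1))) := mul_le_mul_of_nonneg_left hεle hB0
    have hden : (0:ℝ) < 2 * (B + 1) := by linarith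
    have h3 : B * (A / (2 * (B + 1))) < A := by
      rw [mul_div_assoc', div_lt_iff₀ hden]
      nlinarith
    linarith
  obtain ⟨N, hN⟩ : ∃ N : ℕ, ∀ m ≥ N, (∑' k, b (k + m)) < ε :=
    eventually_atTop.1 (htail.eventually (gt_mem_nhds hε0))
  have hchain : ∀ m, N ≤ m → ∀ i, esum b (m + i) ≤ ε ^ i * esum b m := by
    intro m hm i
    induction i with
    | zero => simp
    | succ i ih =>
      calc esum b (m + (i + 1)) = esum b ((m + i) + 1) := rfl
        _ ≤ (∑' k, b (k + (m + i))) * esum b (m + i) := esum_succ_le hb0' hb (m + i)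
        _ ≤ ε * esum b (m + i) :=
            mul_le_mul_of_nonneg_right (hN (m + i) (by omega)).le (esum_nonneg hb0' _)
        _ ≤ ε * (ε ^ i * esum b m) := mul_le_mul_of_nonneg_left ih hε0.le
        _ = ε ^ (i + 1) * esum b m := by ring
  have hcpos : ∀ n, N + d ≤ n → 0 < c n := by
    intro n hn
    have hdn : d ≤ n := by omega
    set m : ℕ := n - d with hmdef
    have hmN : N ≤ m := by omega
    have hepos : 0 < esum b m := esum_pos hb0 hb m
    have hsplit : c n = ∑ j ∈ Finset.range (d + 1), P.coeff j * esum b (n - j) := by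
      simp only [hcdef]
      symm
      apply Finset.sum_subset
      · exact Finset.range_subset_range.2 (by omega)
      · intro j _ hj2
        rw [Finset.mem_range, not_lt] at hj2
        rw [Polynomial.coeff_eq_zero_of_natDegree_lt (by omega), zero_mul]
    have hbound : ∀ j ∈ Finset.range d, esum b (n - j) ≤ ε * esum b m := by
      intro j hj
      rw [Finset.mem_range] at hj
      have hnj : n - j = m + (d - j) := by omega
      rw [hnj]
      calc esum b (m + (d - j)) ≤ ε ^ (d - j) * esum b m := hchain m hmN (d - j)
        _ ≤ ε ^ 1 * esum b m :=
            mul_le_mul_of_nonneg_right (pow_le_pow_of_le_one hε0.le hε1 (by omega))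
              (esum_nonneg hb0' m)
        _ = ε * esum b m := by rw [pow_one]
    have habs : |∑ j ∈ Finset.range d, P.coeff j * esum b (n - j)| ≤ B * (ε * esum b m) := by
      calc |∑ j ∈ Finset.range d, P.coeff j * esum b (n - j)|
          ≤ ∑ j ∈ Finset.range d, |P.coeff j * esum b (n - j)| := Finset.abs_sum_le_sum_abs _ _
        _ = ∑ j ∈ Finset.range d, |P.coeff j| * esum b (n - j) := by
            apply Finset.sum_congr rfl
            intro j _
            rw [abs_mul, _root_.abs_of_nonneg (esum_nonneg hb0' _)]
        _ ≤ ∑ j ∈ Finset.range d, |P.coeff j| * (ε * esum b m) :=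
            Finset.sum_le_sum fun j hj =>
              mul_le_mul_of_nonneg_left (hbound j hj) (abs_nonneg _)
        _ = B * (ε * esum b m) := by rw [hBdef, Finset.sum_mul]
    have hlead : P.coeff d * esum b (n - d) = A * esum b m := by
      rw [hAdef, hddef, Polynomial.coeff_natDegree]
    have hkey : 0 < (A - B * ε) * esum b m := mul_pos (by linarith) hepos
    rw [hsplit, Finset.sum_range_succ, hlead]
    have hneg := neg_abs_le (∑ j ∈ Finset.range d, P.coeff j * esum b (n - j))
    nlinarith [habs, hkey]
  have hev : ∀ᶠ n in atTop, 0 < c n := eventually_atTop.2 ⟨N + d, hcpos⟩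
  constructor
  · filter_upwards [hev] with n hn
    rw [hiter n]
    exact mul_ne_zero (Nat.cast_ne_zero.2 n.factorial_ne_zero)
      (Complex.ofReal_ne_zero.2 hn.ne')
  · have hev2 : ∀ᶠ n in atTop, (iteratedDeriv n F 0 / (n.factorial : ℂ)).arg = 0 := by
      filter_upwards [hev] with n hn
      rw [hiter n, mul_comm, mul_div_assoc, div_self
        (Nat.cast_ne_zero.2 n.factorial_ne_zero : (n.factorial : ℂ) ≠ 0), mul_one]
      exact Complex.arg_ofReal_of_nonneg hn.le
    have heq : (fun n : ℕ => (iteratedDeriv n F 0 / (n.factorial : ℂ)).arg) =ᶠ[atTop]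
        (fun _ => (0 : ℝ)) := hev2
    exact Tendsto.congr' heq.symm tendsto_const_nhds
end
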